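/- arXiv:2210.08599 — 2 statements merged into one kernel-verified Lean document; each statement's English description precedes it below -/
import Mathlib

section
/- Let L ≥ 1, α ∈ (0,1), and Δ = (α^{1/2} − α)/L. Suppose ξ = {ξ_t}_{t=0}^T is a stochastic process with finite support, the deterministic matrix pair (A,C) is (L,α)-detectable (there exists K with ‖K‖ ≤ L such that A − KC is (L,α)-stable), and the random matrices satisfy ‖A − A(ξ_t)‖ ≤ Δ/2 almost surely for t ∈ {1,…,T} and ‖C − C(ξ_t)‖ ≤ Δ/(2L) almost surely for t ∈ {0,…,T−1}. Then the random pair ({A(ξ_t)}_{t=1}^T, {C(ξ_t)}_{t=0}^{T−1}) is (L, α^{1/2})-detectable: there exist almost surely L-bounded matrices K_t(ξ_{0:t}), t ∈ {1,…,T}, such that ‖∏_{t=t'+1}^{t''} (A(ξ_t) − K_t(ξ_{0:t})C(ξ_{t−1}))‖ ≤ L α^{(t''−t')/2} almost surely for all 0 ≤ t' < t'' ≤ T. -/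
open Matrix BigOperators

/-- Operator 2-norm of a real matrix, i.e. the norm of the induced linear map between
Euclidean spaces. -/
noncomputable def opNorm {m n : Type*} [Fintype m] [Fintype n] [DecidableEq n]
    (A : Matrix m n ℝ) : ℝ :=
  ‖LinearMap.toContinuousLinearMap (Matrix.toEuclideanLin A)‖

/-- `mprod Φ a k = Φ (a+k-1) * ⋯ * Φ (a+1) * Φ a`: the ordered product of `k` factors
starting at index `a` (larger indices on the left). -/
def mprod {n : ℕ} (Φ : ℕ → Matrix (Fin n) (Fin n) ℝ) (a : ℕ) : ℕ → Matrix (Fin n) (Fin n) ℝ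
  | 0 => 1
  | k + 1 => Φ (a + k) * mprod Φ a k

/-- Squared Euclidean norm of a vector. -/
noncomputable def sqnorm {m : Type*} [Fintype m] (v : m → ℝ) : ℝ := ∑ i, v i ^ 2

/-- A discrete-time stochastic process with finitely many scenarios, each of positive
probability (so “almost surely” means “for every scenario”).  `ξ t s` is the value of the
process at time `t` in scenario `s`. -/
structure FiniteProcess (Ξ : Type) where
  S : Type
  [finS : Fintype S]
  P : S → ℝ
  P_pos : ∀ s, 0 < P s
  P_sum : ∑ s, P s = 1
  ξ : ℕ → S → Ξ

attribute [instance] FiniteProcess.finS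

namespace FiniteProcess

variable {Ξ : Type} (proc : FiniteProcess Ξ)

/-- Two scenarios have the same past `ξ₀,…,ξ_t`. -/
def PrefixEq (t : ℕ) (s s' : proc.S) : Prop := ∀ τ ≤ t, proc.ξ τ s = proc.ξ τ s'

/-- `f` depends only on `ξ₀,…,ξ_t` (nonanticipativity). -/
def Adapted (t : ℕ) {β : Type*} (f : proc.S → β) : Prop :=
  ∀ s s', proc.PrefixEq t s s' → f s = f s'

open Classical in
/-- Conditional expectation of `f` given `ξ₀,…,ξ_t` equal to the prefix of scenario `sb`. -/
noncomputable def cexp (t : ℕ) (sb : proc.S) (f : proc.S → ℝ) : ℝ :=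
  (∑ s, if proc.PrefixEq t s sb then proc.P s * f s else 0) /
    (∑ s, if proc.PrefixEq t s sb then proc.P s else 0)

open Classical in
/-- Probability of an event. -/
noncomputable def prob (E : proc.S → Prop) : ℝ := ∑ s, if E s then proc.P s else 0

end FiniteProcess

/-!
Keep the gain `K` of the deterministic pair constant in time. Every closed-loop factor
`A(ξ_t) - K C(ξ_{t-1})` is then `Φ = A - K C` plus an error of norm at most
`Δ/2 + L · Δ/(2L) = Δ`. Expanding an ordered product of perturbed factors around the powers
of `Φ` (discrete variation of constants) and inducting on its length, a product of `k`
factors has norm at most `L (α + L Δ)^k`, and `α + L Δ = √α`.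
-/

open scoped Matrix.Norms.L2Operator

lemma opNorm_eq_norm {m n : Type*} [Fintype m] [Fintype n] [DecidableEq n]
    (A : Matrix m n ℝ) : opNorm A = ‖A‖ := rfl

lemma Real.sqrt_pow_eq_pow_sqrt {x : ℝ} (hx : 0 ≤ x) (k : ℕ) : √(x ^ k) = √x ^ k := by
  rw [← Real.sqrt_sq (pow_nonneg (Real.sqrt_nonneg x) k), ← pow_mul, mul_comm, pow_mul,
    Real.sq_sqrt hx]

lemma norm_sub_sub_mul_sub_le {m n : Type*} [Fintype m] [Fintype n] [DecidableEq m]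
    [DecidableEq n] (A A' : Matrix n n ℝ) (K : Matrix n m ℝ) (C C' : Matrix m n ℝ) :
    ‖(A' - K * C') - (A - K * C)‖ ≤ ‖A - A'‖ + ‖K‖ * ‖C - C'‖ := by
  have hdiff : (A' - K * C') - (A - K * C) = -((A - A') - K * (C - C')) := by
    rw [Matrix.mul_sub]; abel
  calc ‖(A' - K * C') - (A - K * C)‖ ≤ ‖A - A'‖ + ‖K * (C - C')‖ := by
        rw [hdiff, norm_neg]; exact norm_sub_le _ _
    _ ≤ ‖A - A'‖ + ‖K‖ * ‖C - C'‖ := by gcongr; exact Matrix.l2_opNorm_mul _ _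

section Perturbation

variable {n : ℕ} (Φ : Matrix (Fin n) (Fin n) ℝ) (E : ℕ → Matrix (Fin n) (Fin n) ℝ) (a : ℕ)

lemma mprod_add_eq_pow_add_sum (k : ℕ) :
    mprod (fun t => Φ + E t) a k
      = Φ ^ k + ∑ j ∈ Finset.range k,
          Φ ^ (k - 1 - j) * E (a + j) * mprod (fun t => Φ + E t) a j := by
  induction k with
  | zero => simp [mprod]
  | succ k ih =>
    have hshift : ∀ j ∈ Finset.range k,
        Φ * (Φ ^ (k - 1 - j) * E (a + j) * mprod (fun t => Φ + E t) a j)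
          = Φ ^ (k + 1 - 1 - j) * E (a + j) * mprod (fun t => Φ + E t) a j := by
      intro j hj
      rw [show k + 1 - 1 - j = (k - 1 - j) + 1 by grind, pow_succ']
      noncomm_ring
    change (Φ + E (a + k)) * mprod (fun t => Φ + E t) a k = _
    rw [add_mul]
    nth_rewrite 1 [ih]
    rw [Finset.sum_range_succ, mul_add, Finset.mul_sum, Finset.sum_congr rfl hshift,
      show k + 1 - 1 - k = 0 by omega, pow_zero, pow_succ', one_mul]
    abel

lemma norm_mprod_add_le {L α Δ : ℝ} (hL : 0 ≤ L) (hα : 0 ≤ α) (hΔ : 0 ≤ Δ)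
    (hΦ : ∀ t, ‖Φ ^ t‖ ≤ L * α ^ t) (k : ℕ) (hE : ∀ j < k, ‖E (a + j)‖ ≤ Δ) :
    ‖mprod (fun t => Φ + E t) a k‖ ≤ L * (α + L * Δ) ^ k := by
  set β := α + L * Δ
  induction k using Nat.strong_induction_on with
  | _ k ih =>
  have hterm : ∀ j ∈ Finset.range k,
      ‖Φ ^ (k - 1 - j) * E (a + j) * mprod (fun t => Φ + E t) a j‖
        ≤ L * α ^ (k - 1 - j) * Δ * (L * β ^ j) := by
    intro j hj
    have hjk : j < k := Finset.mem_range.mp hj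
    have hprod := ih j hjk fun i hi => hE i (hi.trans hjk)
    calc _ ≤ ‖Φ ^ (k - 1 - j)‖ * ‖E (a + j)‖ * ‖mprod (fun t => Φ + E t) a j‖ :=
          (norm_mul_le _ _).trans (by gcongr; exact norm_mul_le _ _)
      _ ≤ _ := by gcongr; exacts [hΦ _, hE j hjk]
  have hgeom : ∑ j ∈ Finset.range k, L * α ^ (k - 1 - j) * Δ * (L * β ^ j)
      = L * (β ^ k - α ^ k) := by
    rw [← geom_sum₂_mul, show β - α = L * Δ by ring, Finset.sum_mul, Finset.mul_sum]
    exact Finset.sum_congr rfl fun j _ => by ring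
  rw [mprod_add_eq_pow_add_sum]
  calc _ ≤ ‖Φ ^ k‖ + ∑ j ∈ Finset.range k,
          ‖Φ ^ (k - 1 - j) * E (a + j) * mprod (fun t => Φ + E t) a j‖ :=
        (norm_add_le _ _).trans (by gcongr; exact norm_sum_le _ _)
    _ ≤ L * α ^ k + ∑ j ∈ Finset.range k, L * α ^ (k - 1 - j) * Δ * (L * β ^ j) :=
        add_le_add (hΦ k) (Finset.sum_le_sum hterm)
    _ = L * β ^ k := by rw [hgeom]; ring

end Perturbation

/-- Proposition `just`, part (c).  Let `L ≥ 1`, `α ∈ (0,1)`,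
`Δ = (√α − α)/L`.  If the deterministic pair `(A,C)` is `(L,α)`-detectable and the random
matrices satisfy `‖A − A(ξ_t)‖ ≤ Δ/2` a.s. for `t ∈ {1,…,T}` and `‖C − C(ξ_t)‖ ≤ Δ/(2L)`
a.s. for `t ∈ {0,…,T−1}`, then `({A(ξ_t)},{C(ξ_t)})` is `(L,√α)`-detectable:
there are a.s. `L`-bounded adapted matrices `K_t(ξ_{0:t})`, `t ∈ {1,…,T}`, such that
`‖∏_{t=t'+1}^{t''}(A(ξ_t) − K_t(ξ_{0:t})C(ξ_{t−1}))‖ ≤ L α^{(t''−t')/2}` a.s. for all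
`0 ≤ t' < t'' ≤ T`. -/
theorem stochastic_detectability_of_perturbed_detectable
    {T nx ny : ℕ} {Ξ : Type} (proc : FiniteProcess Ξ)
    (L α : ℝ) (hL : 1 ≤ L) (hα0 : 0 < α) (hα1 : α < 1)
    (A : Matrix (Fin nx) (Fin nx) ℝ) (C : Matrix (Fin ny) (Fin nx) ℝ)
    (Af : Ξ → Matrix (Fin nx) (Fin nx) ℝ) (Cf : Ξ → Matrix (Fin ny) (Fin nx) ℝ)
    (hdetectable : ∃ K : Matrix (Fin nx) (Fin ny) ℝ, opNorm K ≤ L ∧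
      ∀ t : ℕ, opNorm ((A - K * C) ^ t) ≤ L * α ^ t)
    (hcloseA : ∀ (s : proc.S) (t : ℕ), 1 ≤ t → t ≤ T →
      opNorm (A - Af (proc.ξ t s)) ≤ (Real.sqrt α - α) / L / 2)
    (hcloseC : ∀ (s : proc.S) (t : ℕ), t ≤ T - 1 →
      opNorm (C - Cf (proc.ξ t s)) ≤ (Real.sqrt α - α) / L / (2 * L)) :
    ∃ K : ℕ → proc.S → Matrix (Fin nx) (Fin ny) ℝ,
      (∀ t, 1 ≤ t → t ≤ T → proc.Adapted t (K t)) ∧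
      (∀ (t : ℕ) (s : proc.S), 1 ≤ t → t ≤ T → opNorm (K t s) ≤ L) ∧
      ∀ (s : proc.S) (t' k : ℕ), 1 ≤ k → t' + k ≤ T →
        opNorm (mprod (fun t => Af (proc.ξ t s) - K t s * Cf (proc.ξ (t - 1) s)) (t' + 1) k)
          ≤ L * Real.sqrt (α ^ k) := by
  obtain ⟨K, hK, hstable⟩ := hdetectable
  refine ⟨fun _ _ => K, fun _ _ _ _ _ _ => rfl, fun _ _ _ _ => hK, ?_⟩
  intro s t' k _ hkT
  have hL0 : 0 < L := one_pos.trans_le hL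
  set Δ := (√α - α) / L
  have hΔ : 0 ≤ Δ := div_nonneg (sub_nonneg.mpr (Real.le_sqrt_self_iff.mpr hα1.le)) hL0.le
  have hrate : α + L * Δ = √α := by rw [mul_div_cancel₀ _ hL0.ne']; ring
  have herr : ∀ j < k, ‖(Af (proc.ξ (t' + 1 + j) s) - K * Cf (proc.ξ (t' + 1 + j - 1) s))
      - (A - K * C)‖ ≤ Δ := fun j hj => calc
    _ ≤ Δ / 2 + L * (Δ / (2 * L)) := (norm_sub_sub_mul_sub_le _ _ _ _ _).trans
        (add_le_add (hcloseA s _ (by omega) (by omega))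
          (mul_le_mul hK (hcloseC s _ (by omega)) (norm_nonneg _) hL0.le))
    _ = Δ := by field_simp; ring
  have hbound := norm_mprod_add_le (A - K * C)
    (fun t => (Af (proc.ξ t s) - K * Cf (proc.ξ (t - 1) s)) - (A - K * C)) (t' + 1)
    hL0.le hα0.le hΔ hstable k herr
  simp only [add_sub_cancel, hrate] at hbound
  rwa [Real.sqrt_pow_eq_pow_sqrt hα0.le, opNorm_eq_norm]
end

section
/- Let G = (V,E) be a stage-T scenario tree with nodal probabilities π satisfying π_0 = 1, π_i > 0, and Σ_{j∈children(i)} π_j = π_i, and let π_{i|j} = π_i/π_j. Given node matrices {Φ̲_i} over the nodes at stages 1 through T, define the block matrix Φ̃ by Φ̃_{ij} = (π_{i|j})^{1/2} Φ̲_i if i is a child of j and 0 otherwise. If {Φ̲_i} is (L,α)-stable on the tree with L ≥ 1 and α ∈ (0,1), i.e. ‖∏ Φ̲_{i⇀j}‖ ≤ L α^{t(j)−t(i)} for every node i and every descendant j (ordered product along the path from i, exclusive, to j), then I − Φ̃ is invertible and ‖(I − Φ̃)^{−1}‖ ≤ L/(1 − α). -/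
open Matrix BigOperators

/-- A stage-`T` scenario tree: a finite rooted tree, encoded by the parent map, in which
every leaf is at distance `T` from the root (every node at stage `< T` has a child). -/
structure ScenarioTree (T : ℕ) where
  V : Type
  [finV : Fintype V]
  [deqV : DecidableEq V]
  root : V
  parent : V → V
  stage : V → ℕ
  stage_root : stage root = 0
  parent_root : parent root = root
  stage_parent : ∀ i, i ≠ root → stage (parent i) + 1 = stage i
  root_unique : ∀ i, stage i = 0 → i = root
  stage_le : ∀ i, stage i ≤ T
  extend : ∀ i, stage i < T → ∃ j, parent j = i ∧ stage j = stage i + 1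

attribute [instance] ScenarioTree.finV ScenarioTree.deqV

namespace ScenarioTree

variable {T : ℕ} (G : ScenarioTree T)

/-- The ancestor of `j` at stage `t` (for `t ≤ stage j`). -/
def anc (j : G.V) (t : ℕ) : G.V := G.parent^[G.stage j - t] j

/-- `j` is a descendant of `k` (every node is a descendant of itself). -/
def Desc (k j : G.V) : Prop := G.stage k ≤ G.stage j ∧ G.anc j (G.stage k) = k

/-- The set of children of a node. -/
def children (i : G.V) : Finset G.V :=
  Finset.univ.filter fun j => G.parent j = i ∧ j ≠ G.root

open Classical in
/-- The stage-`t` nodes. -/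
noncomputable def stageNodes (t : ℕ) : Finset G.V :=
  Finset.univ.filter fun i => G.stage i = t

open Classical in
/-- The descendants of `k` within the prediction window of length `W`
(stages `t(k),…,t(k)+W`). -/
noncomputable def subNodes (k : G.V) (W : ℕ) : Finset G.V :=
  Finset.univ.filter fun i => G.Desc k i ∧ G.stage i ≤ G.stage k + W

/-- Ordered product of the nodal matrices along the path ending at `j`, with `c` factors:
`Φ̲_j * Φ̲_{a(j)} * ⋯` (so `pathProd G Φn j (t(j) − t(i))` is `∏ Φ̲_{i⇀j}`). -/
def pathProd {n : ℕ} (Φn : G.V → Matrix (Fin n) (Fin n) ℝ) (j : G.V) :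
    ℕ → Matrix (Fin n) (Fin n) ℝ
  | 0 => 1
  | c + 1 => pathProd Φn j c * Φn (G.parent^[c] j)

/-- Tree `(L,α)`-stability of a family of nodal matrices: the ordered product along the
path from any node `i` (exclusive) to any descendant `j` has norm `≤ L α^{t(j)−t(i)}`. -/
def TreeStable {n : ℕ} (Φn : G.V → Matrix (Fin n) (Fin n) ℝ) (L α : ℝ) : Prop :=
  ∀ i j : G.V, G.Desc i j →
    opNorm (G.pathProd Φn j (G.stage j - G.stage i)) ≤ L * α ^ (G.stage j - G.stage i)

end ScenarioTree

/-- The event that the history `ξ_{0:t(j)}` equals the nodal realizations along the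
root-to-`j` path. -/
def NodeEvent {Ξ : Type} {T : ℕ} (proc : FiniteProcess Ξ) (G : ScenarioTree T)
    (ξn : G.V → Ξ) (j : G.V) (s : proc.S) : Prop :=
  ∀ t ≤ G.stage j, proc.ξ t s = ξn (G.anc j t)

open Classical in
/-- Conditional expectation of `f` given the node event of `k`. -/
noncomputable def nodeCexp {Ξ : Type} {T : ℕ} (proc : FiniteProcess Ξ) (G : ScenarioTree T)
    (ξn : G.V → Ξ) (k : G.V) (f : proc.S → ℝ) : ℝ :=
  (∑ s, if NodeEvent proc G ξn k s then proc.P s * f s else 0) /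
    (∑ s, if NodeEvent proc G ξn k s then proc.P s else 0)

/-- The scenario tree `(G, ξ̲, π)` represents the finite-support process `ξ` conditioned
on `ξ₀ = ξ₀(sb)`:
(a) a sequence is a support prefix iff it is the nodal-realization sequence of a
root-to-node path (with the stage-`τ` ancestor realizing the first `τ+1` entries);
(b) `π` is a unit mass at the root flowing down the tree with positive values;
(c) `P[ξ_{0:t(j)} = ξ̲_{0→j} ∣ ξ_{0:t(k)} = ξ̲_{0→k}] = π_j/π_k` for ancestors `k` of `j`. -/
def Represents {Ξ : Type} {T : ℕ} (proc : FiniteProcess Ξ) (sb : proc.S)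
    (G : ScenarioTree T) (ξn : G.V → Ξ) (πn : G.V → ℝ) : Prop :=
  (∀ (ζ : ℕ → Ξ) (τ t : ℕ), τ ≤ t → t ≤ T →
    ((∃ s : proc.S, proc.ξ 0 s = proc.ξ 0 sb ∧ ∀ v ≤ t, proc.ξ v s = ζ v) ↔
      ∃ k j : G.V, G.stage k = τ ∧ G.stage j = t ∧ G.Desc k j ∧
        (∀ v ≤ τ, ξn (G.anc k v) = ζ v) ∧ (∀ v ≤ t, ξn (G.anc j v) = ζ v))) ∧
  (πn G.root = 1 ∧ (∀ i, 0 < πn i) ∧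
    ∀ i : G.V, G.stage i < T → ∑ j ∈ G.children i, πn j = πn i) ∧
  (∀ k j : G.V, G.Desc k j →
    proc.prob (fun s => NodeEvent proc G ξn j s) =
      πn j / πn k * proc.prob (fun s => NodeEvent proc G ξn k s))

/-- The probability-scaled block-subdiagonal matrix `Φ̃` built from nodal matrices:
`Φ̃_{ij} = (π_i/π_j)^{1/2} Φ̲_i` if `i` is a child of `j`, and `0` otherwise,
flattened to a matrix indexed by `V × Fin n`. -/
noncomputable def scaledShift {T n : ℕ} (G : ScenarioTree T) (πn : G.V → ℝ)
    (Φn : G.V → Matrix (Fin n) (Fin n) ℝ) :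
    Matrix (G.V × Fin n) (G.V × Fin n) ℝ :=
  fun p q =>
    if G.parent p.1 = q.1 ∧ p.1 ≠ G.root then
      Real.sqrt (πn p.1 / πn q.1) * Φn p.1 p.2 q.2
    else 0

/-!
`Φ̃` is nilpotent, so `(I - Φ̃)⁻¹ = ∑_{k ≤ T} Φ̃ ^ k`. Each block row `j` of `Φ̃ ^ k` holds a single
block, `(π_j / π_a) ^ (1/2) ∏ Φ̲_{a ⇀ j}`, in the column of the `k`-th ancestor `a` of `j`. A matrix
with one block per block row has norm at most `C` as soon as, in every block column, the squared
norms of the blocks sum to at most `C ^ 2`. Stability bounds the squared norm of each block by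
`(π_j / π_a) (L α ^ k) ^ 2`, and the probabilities of the depth-`k` descendants of `a` add up to at
most `π_a`; hence `‖Φ̃ ^ k‖ ≤ L α ^ k`, and the geometric series gives `L / (1 - α)`.
-/

section OpNorm

variable {m n : Type*} [Fintype m] [Fintype n] [DecidableEq n]

lemma opNorm_nonneg (A : Matrix m n ℝ) : 0 ≤ opNorm A := norm_nonneg _

@[simp]
lemma opNorm_zero : opNorm (0 : Matrix m n ℝ) = 0 := by
  simp [opNorm]

lemma sqnorm_nonneg (v : m → ℝ) : 0 ≤ sqnorm v :=
  Finset.sum_nonneg fun _ _ => sq_nonneg _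

lemma EuclideanSpace.norm_sq_eq_sqnorm (x : EuclideanSpace ℝ m) : ‖x‖ ^ 2 = sqnorm x.ofLp := by
  simp [EuclideanSpace.norm_sq_eq, sqnorm]

lemma sqnorm_mulVec_le (A : Matrix m n ℝ) (v : n → ℝ) :
    sqnorm (A *ᵥ v) ≤ opNorm A ^ 2 * sqnorm v := by
  have h := (LinearMap.toContinuousLinearMap (toEuclideanLin A)).le_opNorm (WithLp.toLp 2 v)
  have h2 := pow_le_pow_left₀ (norm_nonneg _) h 2
  rwa [mul_pow, EuclideanSpace.norm_sq_eq_sqnorm, EuclideanSpace.norm_sq_eq_sqnorm] at h2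

lemma opNorm_le_of_sqnorm_mulVec_le (A : Matrix m n ℝ) {C : ℝ} (hC : 0 ≤ C)
    (h : ∀ v, sqnorm (A *ᵥ v) ≤ C ^ 2 * sqnorm v) : opNorm A ≤ C := by
  refine ContinuousLinearMap.opNorm_le_bound _ hC fun x => ?_
  refine (pow_le_pow_iff_left₀ (norm_nonneg _) (by positivity) two_ne_zero).mp ?_
  rw [mul_pow, EuclideanSpace.norm_sq_eq_sqnorm, EuclideanSpace.norm_sq_eq_sqnorm]
  exact h x.ofLp

lemma opNorm_smul (c : ℝ) (A : Matrix m n ℝ) : opNorm (c • A) = |c| * opNorm A := by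
  simp only [opNorm, map_smul, norm_smul, Real.norm_eq_abs]

lemma opNorm_sum_le {ι : Type*} (s : Finset ι) (A : ι → Matrix m n ℝ) :
    opNorm (∑ k ∈ s, A k) ≤ ∑ k ∈ s, opNorm (A k) := by
  simp only [opNorm, map_sum]
  exact norm_sum_le _ _

end OpNorm

namespace Matrix

lemma inv_one_sub_eq_geom_sum {ι R : Type*} [Fintype ι] [DecidableEq ι] [CommRing R]
    {N : Matrix ι ι R} {K : ℕ} (hN : N ^ K = 0) :
    (1 - N)⁻¹ = ∑ k ∈ Finset.range K, N ^ k :=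
  inv_eq_left_inv (by rw [geom_sum_mul_neg, hN, sub_zero])

variable {ι κ ν m n o R : Type*} [DecidableEq κ] [DecidableEq ν]

def blockRows [Zero R] (f : ι → κ) (B : ι → Matrix m n R) : Matrix (ι × m) (κ × n) R :=
  fun p q => if f p.1 = q.1 then B p.1 p.2 q.2 else 0

@[simp]
lemma blockRows_zero [Zero R] (f : ι → κ) : blockRows f (0 : ι → Matrix m n R) = 0 := by
  ext p q
  simp [blockRows]

lemma blockRows_id_one [DecidableEq m] [Zero R] [One R] :
    blockRows id (fun _ : κ => (1 : Matrix m m R)) = 1 := by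
  ext ⟨i, a⟩ ⟨j, b⟩
  by_cases hij : i = j <;> by_cases hab : a = b <;> simp [blockRows, one_apply, *]

lemma blockRows_mul_blockRows [Fintype κ] [Fintype n] [NonUnitalNonAssocSemiring R]
    (f : ι → κ) (g : κ → ν) (B : ι → Matrix m n R) (C : κ → Matrix n o R) :
    blockRows f B * blockRows g C = blockRows (g ∘ f) fun i => B i * C (f i) := by
  ext ⟨i, a⟩ ⟨l, c⟩
  rw [mul_apply, Fintype.sum_prod_type, Finset.sum_eq_single (f i)]
  · simp [blockRows, mul_apply]
  · intro k _ hk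
    simp [blockRows, Ne.symm hk]
  · simp

lemma blockRows_mulVec_apply [Fintype κ] [Fintype n] [NonUnitalNonAssocSemiring R]
    (f : ι → κ) (B : ι → Matrix m n R) (v : κ × n → R) (i : ι) (a : m) :
    (blockRows f B *ᵥ v) (i, a) = (B i *ᵥ fun b => v (f i, b)) a := by
  rw [mulVec, dotProduct, Fintype.sum_prod_type, Finset.sum_eq_single (f i)]
  · simp [blockRows, mulVec, dotProduct]
  · intro k _ hk
    simp [blockRows, Ne.symm hk]
  · simp

end Matrix

lemma opNorm_blockRows_le {ι κ m n : Type*} [Fintype ι] [Fintype κ] [DecidableEq κ]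
    [Fintype m] [Fintype n] [DecidableEq n] (f : ι → κ) (B : ι → Matrix m n ℝ) {C : ℝ}
    (hC : 0 ≤ C) (hB : ∀ k, ∑ i ∈ Finset.univ.filter (f · = k), opNorm (B i) ^ 2 ≤ C ^ 2) :
    opNorm (blockRows f B) ≤ C := by
  refine opNorm_le_of_sqnorm_mulVec_le _ hC fun v => ?_
  set w : κ → ℝ := fun k => sqnorm fun b => v (k, b)
  calc sqnorm (blockRows f B *ᵥ v)
      = ∑ i, sqnorm (B i *ᵥ fun b => v (f i, b)) := by
        simp only [sqnorm, Fintype.sum_prod_type, blockRows_mulVec_apply]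
    _ ≤ ∑ i, opNorm (B i) ^ 2 * w (f i) :=
        Finset.sum_le_sum fun i _ => sqnorm_mulVec_le _ _
    _ = ∑ k, (∑ i ∈ Finset.univ.filter (f · = k), opNorm (B i) ^ 2) * w k := by
        rw [← Finset.sum_fiberwise_of_maps_to (fun i _ => Finset.mem_univ (f i))]
        refine Finset.sum_congr rfl fun k _ => ?_
        rw [Finset.sum_mul]
        exact Finset.sum_congr rfl fun i hi => by rw [(Finset.mem_filter.mp hi).2]
    _ ≤ ∑ k, C ^ 2 * w k :=
        Finset.sum_le_sum fun k _ => mul_le_mul_of_nonneg_right (hB k) (sqnorm_nonneg _)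
    _ = C ^ 2 * sqnorm v := by
        rw [← Finset.mul_sum]
        simp only [w, sqnorm, Fintype.sum_prod_type]

namespace ScenarioTree

variable {T n : ℕ} (G : ScenarioTree T)

lemma stage_pos_iff_ne_root {i : G.V} : 0 < G.stage i ↔ i ≠ G.root := by
  constructor
  · rintro h rfl
    simp [G.stage_root] at h
  · intro h
    exact Nat.pos_of_ne_zero fun h0 => h (G.root_unique i h0)

lemma stage_iterate_parent {i : G.V} {k : ℕ} (hk : k ≤ G.stage i) :
    G.stage (G.parent^[k] i) = G.stage i - k := by
  induction k with
  | zero => rfl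
  | succ k ih =>
    have hne : G.parent^[k] i ≠ G.root := G.stage_pos_iff_ne_root.mp (by omega)
    have := G.stage_parent _ hne
    rw [Function.iterate_succ_apply']
    omega

lemma children_eq_empty_of_stage_eq {i : G.V} (hi : G.stage i = T) : G.children i = ∅ := by
  refine Finset.eq_empty_of_forall_notMem fun j hj => ?_
  obtain ⟨rfl, hne⟩ := (Finset.mem_filter.mp hj).2
  have := G.stage_parent j hne
  have := G.stage_le j
  omega

lemma pairwiseDisjoint_children (s : Set G.V) : s.PairwiseDisjoint G.children := by
  intro i _ i' _ hne
  refine Finset.disjoint_left.mpr fun j hj hj' => hne ?_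
  rw [← (Finset.mem_filter.mp hj).2.1, ← (Finset.mem_filter.mp hj').2.1]

def descendantsAt (i : G.V) (k : ℕ) : Finset G.V :=
  Finset.univ.filter fun j => k ≤ G.stage j ∧ G.parent^[k] j = i

lemma descendantsAt_succ (i : G.V) (k : ℕ) :
    G.descendantsAt i (k + 1) = (G.descendantsAt i k).biUnion G.children := by
  ext j
  simp only [descendantsAt, children, Finset.mem_filter, Finset.mem_univ, true_and,
    Finset.mem_biUnion]
  rw [Function.iterate_succ_apply]
  constructor
  · rintro ⟨hk, hj⟩
    have hne : j ≠ G.root := G.stage_pos_iff_ne_root.mp (by omega)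
    have := G.stage_parent j hne
    exact ⟨G.parent j, ⟨by omega, hj⟩, rfl, hne⟩
  · rintro ⟨m, ⟨hk, hm⟩, rfl, hne⟩
    have := G.stage_parent j hne
    exact ⟨by omega, hm⟩

variable {G}

lemma stage_sub_of_mem_descendantsAt {i j : G.V} {k : ℕ} (h : j ∈ G.descendantsAt i k) :
    G.stage j - G.stage i = k := by
  obtain ⟨hk, rfl⟩ := (Finset.mem_filter.mp h).2
  rw [G.stage_iterate_parent hk]
  omega

lemma desc_of_mem_descendantsAt {i j : G.V} {k : ℕ} (h : j ∈ G.descendantsAt i k) :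
    G.Desc i j := by
  refine ⟨?_, ?_⟩
  · obtain ⟨hk, rfl⟩ := (Finset.mem_filter.mp h).2
    rw [G.stage_iterate_parent hk]
    omega
  · simp only [anc, stage_sub_of_mem_descendantsAt h]
    exact (Finset.mem_filter.mp h).2.2

lemma TreeStable.opNorm_pathProd_le {Φn : G.V → Matrix (Fin n) (Fin n) ℝ} {L α : ℝ}
    (hstab : G.TreeStable Φn L α) {i j : G.V} {k : ℕ} (h : j ∈ G.descendantsAt i k) :
    opNorm (G.pathProd Φn j k) ≤ L * α ^ k := by
  simpa only [stage_sub_of_mem_descendantsAt h] using hstab i j (desc_of_mem_descendantsAt h)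

variable {πn : G.V → ℝ}

lemma sum_children_le (hnonneg : ∀ i, 0 ≤ πn i)
    (hsum : ∀ i : G.V, G.stage i < T → ∑ j ∈ G.children i, πn j = πn i) (i : G.V) :
    ∑ j ∈ G.children i, πn j ≤ πn i := by
  rcases (G.stage_le i).lt_or_eq with hi | hi
  · exact (hsum i hi).le
  · simpa [G.children_eq_empty_of_stage_eq hi] using hnonneg i

lemma sum_descendantsAt_le (hnonneg : ∀ i, 0 ≤ πn i)
    (hsum : ∀ i : G.V, G.stage i < T → ∑ j ∈ G.children i, πn j = πn i) (i : G.V) (k : ℕ) :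
    ∑ j ∈ G.descendantsAt i k, πn j ≤ πn i := by
  induction k with
  | zero => simp [descendantsAt, Finset.filter_eq']
  | succ k ih =>
    rw [G.descendantsAt_succ, Finset.sum_biUnion (G.pairwiseDisjoint_children _)]
    exact (Finset.sum_le_sum fun m _ => sum_children_le hnonneg hsum m).trans ih

end ScenarioTree

section ScaledShift

variable {T n : ℕ} (G : ScenarioTree T) (πn : G.V → ℝ) (Φn : G.V → Matrix (Fin n) (Fin n) ℝ)

/-- The block of `Φ̃ ^ k` in block row `j`; it sits in the column of the `k`-th ancestor `a` of
`j` and equals `(π_j / π_a) ^ (1/2) ∏ Φ̲_{a ⇀ j}`. -/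
noncomputable def scaledPathBlock (k : ℕ) (j : G.V) : Matrix (Fin n) (Fin n) ℝ :=
  if k ≤ G.stage j then √(πn j / πn (G.parent^[k] j)) • G.pathProd Φn j k else 0

lemma scaledShift_eq_blockRows :
    scaledShift G πn Φn = blockRows G.parent (scaledPathBlock G πn Φn 1) := by
  ext ⟨j, a⟩ ⟨i, b⟩
  have hroot : j ≠ G.root ↔ 1 ≤ G.stage j := G.stage_pos_iff_ne_root.symm
  simp only [scaledShift, blockRows, scaledPathBlock, hroot]
  split_ifs <;> simp_all [ScenarioTree.pathProd]

variable {πn}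

lemma scaledPathBlock_of_stage_lt {k : ℕ} {j : G.V} (hj : G.stage j < k) :
    scaledPathBlock G πn Φn k j = 0 :=
  if_neg (not_le.mpr hj)

lemma scaledPathBlock_zero (hpos : ∀ i, 0 < πn i) : scaledPathBlock G πn Φn 0 = fun _ => 1 := by
  ext1 j
  simp [scaledPathBlock, ScenarioTree.pathProd, div_self (hpos j).ne']

lemma scaledPathBlock_succ (hpos : ∀ i, 0 < πn i) (k : ℕ) (j : G.V) :
    scaledPathBlock G πn Φn (k + 1) j =
      scaledPathBlock G πn Φn k j * scaledPathBlock G πn Φn 1 (G.parent^[k] j) := by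
  by_cases hk : k + 1 ≤ G.stage j
  · have hstage : 1 ≤ G.stage (G.parent^[k] j) := by
      rw [G.stage_iterate_parent (by omega)]; omega
    have hsqrt : √(πn j / πn (G.parent^[k] j)) * √(πn (G.parent^[k] j) / πn (G.parent^[k+1] j))
        = √(πn j / πn (G.parent^[k + 1] j)) := by
      rw [← Real.sqrt_mul (div_pos (hpos _) (hpos _)).le, div_mul_div_cancel₀ (hpos _).ne']
    simp only [scaledPathBlock, if_pos hk, if_pos (show k ≤ G.stage j by omega), if_pos hstage,
      smul_mul_smul, ScenarioTree.pathProd, Function.iterate_zero, id, one_mul]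
    rw [Function.iterate_one, ← Function.iterate_succ_apply' G.parent, hsqrt]
  · rw [scaledPathBlock_of_stage_lt G Φn (not_le.mp hk)]
    by_cases hk' : k ≤ G.stage j
    · have : G.stage (G.parent^[k] j) < 1 := by rw [G.stage_iterate_parent hk']; omega
      rw [scaledPathBlock_of_stage_lt G Φn this, mul_zero]
    · rw [scaledPathBlock_of_stage_lt G Φn (not_le.mp hk'), zero_mul]

lemma scaledShift_pow (hpos : ∀ i, 0 < πn i) (k : ℕ) :
    scaledShift G πn Φn ^ k = blockRows G.parent^[k] (scaledPathBlock G πn Φn k) := by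
  induction k with
  | zero => rw [pow_zero, scaledPathBlock_zero G Φn hpos, Function.iterate_zero, blockRows_id_one]
  | succ k ih =>
    rw [pow_succ, ih, scaledShift_eq_blockRows, blockRows_mul_blockRows,
      ← Function.iterate_succ']
    congr 1
    exact funext fun j => (scaledPathBlock_succ G Φn hpos k j).symm

lemma scaledShift_pow_stage_succ (hpos : ∀ i, 0 < πn i) : scaledShift G πn Φn ^ (T + 1) = 0 := by
  have : scaledPathBlock G πn Φn (T + 1) = 0 :=
    funext fun j => scaledPathBlock_of_stage_lt G Φn (Nat.lt_succ_of_le (G.stage_le j))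
  rw [scaledShift_pow G Φn hpos, this, blockRows_zero]

lemma opNorm_scaledPathBlock_sq_le (hpos : ∀ i, 0 < πn i) {L α : ℝ}
    (hstab : G.TreeStable Φn L α) {i j : G.V} {k : ℕ} (hj : j ∈ G.descendantsAt i k) :
    opNorm (scaledPathBlock G πn Φn k j) ^ 2 ≤ πn j / πn i * (L * α ^ k) ^ 2 := by
  obtain ⟨hk, hji⟩ := (Finset.mem_filter.mp hj).2
  rw [scaledPathBlock, if_pos hk, hji, opNorm_smul, abs_of_nonneg (Real.sqrt_nonneg _), mul_pow,
    Real.sq_sqrt (div_pos (hpos j) (hpos i)).le]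
  exact mul_le_mul_of_nonneg_left
    (pow_le_pow_left₀ (opNorm_nonneg _) (hstab.opNorm_pathProd_le hj) 2)
    (div_pos (hpos j) (hpos i)).le

lemma opNorm_scaledShift_pow_le (hpos : ∀ i, 0 < πn i)
    (hsum : ∀ i : G.V, G.stage i < T → ∑ j ∈ G.children i, πn j = πn i)
    {L α : ℝ} (hL : 0 ≤ L) (hα : 0 ≤ α) (hstab : G.TreeStable Φn L α) (k : ℕ) :
    opNorm (scaledShift G πn Φn ^ k) ≤ L * α ^ k := by
  rw [scaledShift_pow G Φn hpos]
  refine opNorm_blockRows_le _ _ (by positivity) fun i => ?_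
  have hsubset : G.descendantsAt i k ⊆ Finset.univ.filter (G.parent^[k] · = i) :=
    fun j hj => Finset.mem_filter.mpr ⟨Finset.mem_univ _, (Finset.mem_filter.mp hj).2.2⟩
  have hvanish : ∀ j ∈ Finset.univ.filter (G.parent^[k] · = i), j ∉ G.descendantsAt i k →
      opNorm (scaledPathBlock G πn Φn k j) ^ 2 = 0 := fun j hj hjD => by
    have hk : G.stage j < k := not_le.mp fun hk =>
      hjD (Finset.mem_filter.mpr ⟨Finset.mem_univ _, hk, (Finset.mem_filter.mp hj).2⟩)
    simp [scaledPathBlock_of_stage_lt G Φn hk]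
  calc ∑ j ∈ Finset.univ.filter (G.parent^[k] · = i), opNorm (scaledPathBlock G πn Φn k j) ^ 2
      = ∑ j ∈ G.descendantsAt i k, opNorm (scaledPathBlock G πn Φn k j) ^ 2 :=
        (Finset.sum_subset hsubset hvanish).symm
    _ ≤ ∑ j ∈ G.descendantsAt i k, πn j / πn i * (L * α ^ k) ^ 2 :=
        Finset.sum_le_sum fun j hj => opNorm_scaledPathBlock_sq_le G Φn hpos hstab hj
    _ = (∑ j ∈ G.descendantsAt i k, πn j) / πn i * (L * α ^ k) ^ 2 := by
        rw [← Finset.sum_mul, Finset.sum_div]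
    _ ≤ (L * α ^ k) ^ 2 := by
        refine mul_le_of_le_one_left (sq_nonneg _) ((div_le_one (hpos i)).mpr ?_)
        exact ScenarioTree.sum_descendantsAt_le (fun j => (hpos j).le) hsum i k

end ScaledShift

theorem scaled_shift_resolvent_bound_general
    {T n : ℕ} (G : ScenarioTree T) (πn : G.V → ℝ)
    (hpos : ∀ i, 0 < πn i)
    (hsum : ∀ i : G.V, G.stage i < T → ∑ j ∈ G.children i, πn j = πn i)
    (Φn : G.V → Matrix (Fin n) (Fin n) ℝ)
    (L α : ℝ) (hL : 1 ≤ L) (hα0 : 0 < α) (hα1 : α < 1)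
    (hstab : G.TreeStable Φn L α) :
    IsUnit (1 - scaledShift G πn Φn) ∧
      opNorm (1 - scaledShift G πn Φn)⁻¹ ≤ L / (1 - α) := by
  have hnil := scaledShift_pow_stage_succ G Φn hpos
  refine ⟨IsNilpotent.isUnit_one_sub ⟨_, hnil⟩, ?_⟩
  calc opNorm (1 - scaledShift G πn Φn)⁻¹
      ≤ ∑ k ∈ Finset.range (T + 1), opNorm (scaledShift G πn Φn ^ k) := by
        rw [inv_one_sub_eq_geom_sum hnil]
        exact opNorm_sum_le _ _
    _ ≤ ∑ k ∈ Finset.range (T + 1), L * α ^ k :=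
        Finset.sum_le_sum fun k _ =>
          opNorm_scaledShift_pow_le G Φn hpos hsum (by linarith) hα0.le hstab k
    _ ≤ L / (1 - α) := by
        rw [← Finset.mul_sum, ← mul_one_div, Finset.range_eq_Ico]
        have := geom_sum_Ico_le_of_lt_one (m := 0) (n := T + 1) hα0.le hα1
        rw [pow_zero] at this
        exact mul_le_mul_of_nonneg_left this (by linarith)

/-- Lemma `basic`, part (b).  On a stage-`T` scenario tree with nodal
probabilities `π` (`π₀ = 1`, `π > 0`, children masses sum to the parent's), if the nodal
matrices `{Φ̲_i}` are `(L,α)`-stable on the tree with `L ≥ 1` and `α ∈ (0,1)`, then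
`I − Φ̃` is invertible and `‖(I − Φ̃)⁻¹‖ ≤ L/(1−α)`. -/
theorem scaled_shift_resolvent_bound
    {T n : ℕ} (G : ScenarioTree T) (πn : G.V → ℝ)
    (hroot : πn G.root = 1) (hpos : ∀ i, 0 < πn i)
    (hsum : ∀ i : G.V, G.stage i < T → ∑ j ∈ G.children i, πn j = πn i)
    (Φn : G.V → Matrix (Fin n) (Fin n) ℝ)
    (L α : ℝ) (hL : 1 ≤ L) (hα0 : 0 < α) (hα1 : α < 1)
    (hstab : G.TreeStable Φn L α) :
    IsUnit (1 - scaledShift G πn Φn) ∧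
      opNorm (1 - scaledShift G πn Φn)⁻¹ ≤ L / (1 - α) :=
  scaled_shift_resolvent_bound_general G πn hpos hsum Φn L α hL hα0 hα1 hstab
end
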